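/- arXiv:2312.07586 — 5 statements merged into one kernel-verified Lean document; each statement's English description precedes it below -/
import Mathlib

section
/- Suppose the characteristic ODE system dx/dt = −(x/2 + s(x(t),t)) holds along a curve x(t), where s solves the harmonic-ansatz score equation ∂_t s = (1/2)(∇(s·x) + ∇‖s‖²). Then along the curve, d/dt [s(x(t),t)] = (1/2) s(x(t),t). -/
/-- Partial derivative in the `i`-th coordinate direction. -/
noncomputable def pd {n : ℕ} (f : (Fin n → ℝ) → ℝ) (i : Fin n) (x : Fin n → ℝ) : ℝ :=
  fderiv ℝ f x (Pi.single i 1)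

/-- Along characteristic curves dx/dt = −(x/2 + s(x,t)) of the
harmonic-ansatz score equation ∂ₜ s = (1/2)(∇(s·x) + ∇‖s‖²) (with s a gradient
field, i.e. symmetric Jacobian), one has d/dt [s(x(t),t)] = (1/2) s(x(t),t). -/
theorem stmt_7 {n : ℕ} (T : ℝ) (hT : 0 < T)
    (s : (Fin n → ℝ) → ℝ → Fin n → ℝ)
    (hsmooth : ContDiff ℝ (⊤ : ℕ∞) (Function.uncurry s))
    (hsym : ∀ x t i j, pd (fun y => s y t j) i x = pd (fun y => s y t i) j x)
    (hFP : ∀ x, ∀ t ∈ Set.Icc (0 : ℝ) T, ∀ i,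
      deriv (fun τ => s x τ i) t =
        (1 / 2) * (pd (fun y => ∑ j, s y t j * y j) i x
          + pd (fun y => ∑ j, (s y t j) ^ 2) i x))
    (x : ℝ → Fin n → ℝ) (hx : ContDiff ℝ (⊤ : ℕ∞) x)
    (hode : ∀ t ∈ Set.Icc (0 : ℝ) T,
      deriv x t = -((1 / 2 : ℝ) • x t + s (x t) t)) :
    ∀ t ∈ Set.Icc (0 : ℝ) T, ∀ i,
      deriv (fun τ => s (x τ) τ i) t = (1 / 2) * s (x t) t i := by
  intro t ht i
  -- differentiability of coordinate functions of uncurried s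
  have hUd : ∀ k, Differentiable ℝ (fun p : (Fin n → ℝ) × ℝ => s p.1 p.2 k) := by
    intro k
    exact ((contDiff_pi.mp hsmooth k).differentiable (by simp))
  -- differentiability in space
  have hyd : ∀ τ k, ∀ y, HasFDerivAt (fun y => s y τ k)
      ((fderiv ℝ (fun p : (Fin n → ℝ) × ℝ => s p.1 p.2 k) (y, τ)).comp
        (ContinuousLinearMap.inl ℝ (Fin n → ℝ) ℝ)) y := by
    intro τ k y
    exact ((hUd k (y, τ)).hasFDerivAt).comp y (hasFDerivAt_prodMk_left (𝕜 := ℝ) y τ)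
  set D := fderiv ℝ (fun p : (Fin n → ℝ) × ℝ => s p.1 p.2 i) (x t, t) with hDdef
  have hD : HasFDerivAt (fun p : (Fin n → ℝ) × ℝ => s p.1 p.2 i) D (x t, t) :=
    (hUd i (x t, t)).hasFDerivAt
  -- the curve τ ↦ (x τ, τ)
  have hxd : HasDerivAt x (deriv x t) t := (hx.differentiable (by simp) t).hasDerivAt
  have hcurve : HasDerivAt (fun τ => (x τ, τ)) (deriv x t, 1) t :=
    hxd.prodMk (hasDerivAt_id t)
  have hcomp : HasDerivAt (fun τ => s (x τ) τ i) (D (deriv x t, 1)) t := by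
    have h := HasFDerivAt.comp_hasDerivAt (f := fun τ => (x τ, τ)) t hD hcurve
    exact h
  -- spatial partials of s_i expressed via D
  have hspace : ∀ j, pd (fun y => s y t i) j (x t) = D (Pi.single j 1, 0) := by
    intro j
    have h1 := hyd t i (x t)
    rw [pd, h1.fderiv]
    simp [hDdef]
  -- time derivative expressed via D
  have htime : deriv (fun τ => s (x t) τ i) t = D ((0 : Fin n → ℝ), 1) := by
    have hc : HasDerivAt (fun τ : ℝ => ((x t : Fin n → ℝ), τ)) ((0 : Fin n → ℝ), 1) t :=
      (hasDerivAt_const t (x t)).prodMk (hasDerivAt_id t)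
    exact (hD.comp_hasDerivAt t hc).deriv
  -- linearity: D on spatial vectors
  have hlin : ∀ v : Fin n → ℝ, D (v, 0) = ∑ j, v j * D (Pi.single j 1, 0) := by
    intro v
    set L := D.comp (ContinuousLinearMap.inl ℝ (Fin n → ℝ) ℝ) with hL
    have h0 : ∀ w : Fin n → ℝ, D (w, 0) = L w := fun w => by simp [hL]
    rw [h0]
    conv_lhs => rw [← Finset.univ_sum_single v]
    rw [map_sum]
    refine Finset.sum_congr rfl fun j _ => ?_
    have hsing : Pi.single j (v j) = v j • (Pi.single j 1 : Fin n → ℝ) := by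
      rw [← Pi.single_smul]; simp
    rw [hsing, map_smul, smul_eq_mul, h0]
  -- fderiv of s_j in space at x t
  have hsd : ∀ j, DifferentiableAt ℝ (fun y => s y t j) (x t) :=
    fun j => (hyd t j (x t)).differentiableAt
  -- partial of the dot product
  have hA : pd (fun y => ∑ j, s y t j * y j) i (x t)
      = (∑ j, x t j * pd (fun y => s y t j) i (x t)) + s (x t) t i := by
    have hterm : ∀ j : Fin n, HasFDerivAt (fun y : Fin n → ℝ => s y t j * y j)
        (s (x t) t j • (ContinuousLinearMap.proj j : (Fin n → ℝ) →L[ℝ] ℝ)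
          + x t j • fderiv ℝ (fun y => s y t j) (x t)) (x t) := by
      intro j
      have h1 : HasFDerivAt (fun y : Fin n → ℝ => y j)
          (ContinuousLinearMap.proj j : (Fin n → ℝ) →L[ℝ] ℝ) (x t) :=
        (ContinuousLinearMap.proj j : (Fin n → ℝ) →L[ℝ] ℝ).hasFDerivAt
      exact (hsd j).hasFDerivAt.mul h1
    have hsum := HasFDerivAt.fun_sum (fun j (_ : j ∈ Finset.univ) => hterm j)
    rw [pd, hsum.fderiv]
    simp only [ContinuousLinearMap.sum_apply, ContinuousLinearMap.add_apply,
      ContinuousLinearMap.smul_apply, ContinuousLinearMap.proj_apply, smul_eq_mul]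
    rw [Finset.sum_add_distrib]
    have hsng : ∑ j, s (x t) t j * (Pi.single i 1 : Fin n → ℝ) j = s (x t) t i := by
      rw [Finset.sum_eq_single i]
      · simp
      · intro b _ hb
        rw [Pi.single_eq_of_ne hb, mul_zero]
      · intro h; exact absurd (Finset.mem_univ i) h
    rw [hsng, add_comm]
    simp only [pd]
  -- partial of the squared norm
  have hB : pd (fun y => ∑ j, (s y t j) ^ 2) i (x t)
      = ∑ j, 2 * s (x t) t j * pd (fun y => s y t j) i (x t) := by
    have hterm : ∀ j : Fin n, HasFDerivAt (fun y : Fin n → ℝ => (s y t j) ^ 2)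
        (s (x t) t j • fderiv ℝ (fun y => s y t j) (x t)
          + s (x t) t j • fderiv ℝ (fun y => s y t j) (x t)) (x t) := by
      intro j
      have := (hsd j).hasFDerivAt.fun_mul (hsd j).hasFDerivAt
      simpa [pow_two] using this
    have hsum := HasFDerivAt.fun_sum (fun j (_ : j ∈ Finset.univ) => hterm j)
    rw [pd, hsum.fderiv]
    simp only [ContinuousLinearMap.sum_apply, ContinuousLinearMap.add_apply,
      ContinuousLinearMap.smul_apply, smul_eq_mul]
    refine Finset.sum_congr rfl fun j _ => ?_
    simp only [pd]; ring
  -- assemble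
  rw [hcomp.deriv]
  have hsplit : ((deriv x t, (1:ℝ)) : (Fin n → ℝ) × ℝ)
      = ((deriv x t, (0:ℝ)) : (Fin n → ℝ) × ℝ) + (0, 1) := by simp
  rw [hsplit, map_add, hlin, ← htime, hFP (x t) t ht i, hA, hB, hode t ht]
  have hDj : ∀ j, D (Pi.single j 1, 0) = pd (fun y => s y t j) i (x t) := by
    intro j
    rw [← hspace j, hsym (x t) t i j]
  simp only [hDj, Pi.neg_apply, Pi.add_apply, Pi.smul_apply, smul_eq_mul]
  have hz : (∑ j, -(1 / 2 * x t j + s (x t) t j) * pd (fun y => s y t j) i (x t))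
      = ∑ j, (-(1/2) * (x t j * pd (fun y => s y t j) i (x t)
          + 2 * s (x t) t j * pd (fun y => s y t j) i (x t))) :=
    Finset.sum_congr rfl fun j _ => by ring
  have hw : (∑ j, x t j * pd (fun y => s y t j) i (x t)) + s (x t) t i
      + ∑ j, 2 * s (x t) t j * pd (fun y => s y t j) i (x t)
      = (∑ j, (x t j * pd (fun y => s y t j) i (x t)
          + 2 * s (x t) t j * pd (fun y => s y t j) i (x t))) + s (x t) t i := by
    rw [Finset.sum_add_distrib]; ring
  rw [hz, ← Finset.mul_sum, hw]
  ring
end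

section
/- Along a characteristic line of the harmonic-ansatz score equation, the solution admits the closed form: x(t) = e^{−t/2} x_0 − (1 − e^{−t}) s(x(t), t) and s(x(t), t) = s(x_0, 0) e^{t/2}, where x_0 = x(0). -/
/-- Along a characteristic line of the harmonic-ansatz score equation,
x(t) = e^{−t/2} x₀ − (1 − e^{−t}) s(x(t),t) and s(x(t),t) = e^{t/2} s(x₀,0). -/
theorem stmt_8 {n : ℕ} (T : ℝ) (hT : 0 < T)
    (s : (Fin n → ℝ) → ℝ → Fin n → ℝ)
    (hsmooth : ContDiff ℝ (⊤ : ℕ∞) (Function.uncurry s))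
    (hsym : ∀ x t i j, pd (fun y => s y t j) i x = pd (fun y => s y t i) j x)
    (hFP : ∀ x, ∀ t ∈ Set.Icc (0 : ℝ) T, ∀ i,
      deriv (fun τ => s x τ i) t =
        (1 / 2) * (pd (fun y => ∑ j, s y t j * y j) i x
          + pd (fun y => ∑ j, (s y t j) ^ 2) i x))
    (x : ℝ → Fin n → ℝ) (hx : ContDiff ℝ (⊤ : ℕ∞) x)
    (hode : ∀ t ∈ Set.Icc (0 : ℝ) T,
      deriv x t = -((1 / 2 : ℝ) • x t + s (x t) t))
    (x₀ : Fin n → ℝ) (hx0 : x 0 = x₀) :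
    ∀ t ∈ Set.Icc (0 : ℝ) T,
      x t = Real.exp (-t / 2) • x₀ - (1 - Real.exp (-t)) • s (x t) t
        ∧ s (x t) t = Real.exp (t / 2) • s x₀ 0 := by
    -- basic smoothness facts
  have hFc : ∀ i, ContDiff ℝ (⊤ : ℕ∞) (fun p : (Fin n → ℝ) × ℝ => s p.1 p.2 i) := fun i =>
    (ContinuousLinearMap.proj i : ((Fin n → ℝ)) →L[ℝ] ℝ).contDiff.comp hsmooth
  have hsd : ∀ (t : ℝ) (y : Fin n → ℝ) (j : Fin n),
      HasFDerivAt (fun z => s z t j) (fderiv ℝ (fun z => s z t j) y) y := by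
    intro t y j
    have h1 : ContDiff ℝ (⊤ : ℕ∞) (fun z : Fin n → ℝ => s z t j) :=
      (hFc j).comp (contDiff_id.prodMk contDiff_const)
    exact (h1.differentiable (by simp) _).hasFDerivAt
  have hxd : ∀ t, HasDerivAt x (deriv x t) t := fun t => (hx.differentiable (by simp) _).hasDerivAt
  -- chain rule : total derivative of g i τ = s (x τ) τ i
  have hchain : ∀ (t : ℝ) (i : Fin n), HasDerivAt (fun τ => s (x τ) τ i)
      (deriv (fun τ => s (x t) τ i) t +
        ∑ j, deriv x t j * pd (fun y => s y t i) j (x t)) t := by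
    intro t i
    set F : ((Fin n → ℝ) × ℝ) → ℝ := fun p => s p.1 p.2 i with hF
    set L : ((Fin n → ℝ) × ℝ) →L[ℝ] ℝ := fderiv ℝ F (x t, t) with hL
    have hFd : HasFDerivAt F L (x t, t) := ((hFc i).differentiable (by simp) _).hasFDerivAt
    have hγ : HasDerivAt (fun τ => ((x τ, τ) : (Fin n → ℝ) × ℝ)) (deriv x t, 1) t :=
      (hxd t).prodMk (hasDerivAt_id t)
    have hcomp : HasDerivAt (fun τ => s (x τ) τ i) (L (deriv x t, 1)) t :=
      HasFDerivAt.comp_hasDerivAt (f := fun τ => ((x τ, τ) : (Fin n → ℝ) × ℝ)) t hFd hγ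
    have hsplit : L (deriv x t, 1) = L (0, 1) + L (deriv x t, 0) := by
      rw [← map_add]; norm_num
    have ht1 : HasDerivAt (fun τ => s (x t) τ i) (L (0, 1)) t := by
      have hγ2 : HasDerivAt (fun τ => ((x t, τ) : (Fin n → ℝ) × ℝ)) (0, 1) t :=
        (hasDerivAt_const t (x t)).prodMk (hasDerivAt_id t)
      exact hFd.comp_hasDerivAt t hγ2
    have hsp : HasFDerivAt (fun y => s y t i) (L.comp (ContinuousLinearMap.inl ℝ _ _)) (x t) := by
      have hι : HasFDerivAt (fun y : Fin n → ℝ => ((y, t) : (Fin n → ℝ) × ℝ))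
          (ContinuousLinearMap.inl ℝ _ _) (x t) :=
        (hasFDerivAt_id (x t)).prodMk (hasFDerivAt_const t (x t))
      exact hFd.comp (x t) hι
    have hsp2 : ∀ j, pd (fun y => s y t i) j (x t) = L (Pi.single j 1, 0) := by
      intro j
      rw [pd, hsp.fderiv]
      rfl
    have hvec : L (deriv x t, 0) = ∑ j, deriv x t j * pd (fun y => s y t i) j (x t) := by
      have h0 : (deriv x t, (0:ℝ)) =
          ∑ j, (deriv x t j) • ((Pi.single j 1, 0) : (Fin n → ℝ) × ℝ) := by
        ext k
        · simp [Prod.fst_sum, Finset.sum_apply, Pi.single_apply]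
        · simp [Prod.snd_sum]
      rw [h0, map_sum]
      refine Finset.sum_congr rfl fun j _ => ?_
      rw [map_smul, hsp2]
      rfl
    rw [ht1.deriv]
    rw [hsplit, hvec] at hcomp
    exact hcomp
  -- pd computations
  have hpd1 : ∀ (t : ℝ) (y : Fin n → ℝ) (i : Fin n),
      pd (fun z => ∑ j, s z t j * z j) i y
        = s y t i + ∑ j, y j * pd (fun z => s z t j) i y := by
    intro t y i
    set D : Fin n → ((Fin n → ℝ) →L[ℝ] ℝ) := fun j => fderiv ℝ (fun z => s z t j) y with hD
    have hpd : ∀ j, pd (fun z => s z t j) i y = D j (Pi.single i 1) := fun j => rfl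
    have h1 : HasFDerivAt (fun z : Fin n → ℝ => ∑ j, s z t j * z j)
        (∑ j, (s y t j • (ContinuousLinearMap.proj j : ((Fin n → ℝ)) →L[ℝ] ℝ) + y j • D j)) y := by
      apply HasFDerivAt.fun_sum
      intro j _
      exact (hsd t y j).mul ((ContinuousLinearMap.proj j : ((Fin n → ℝ)) →L[ℝ] ℝ).hasFDerivAt)
    rw [pd, h1.fderiv]
    simp only [ContinuousLinearMap.sum_apply, ContinuousLinearMap.add_apply,
      ContinuousLinearMap.smul_apply, ContinuousLinearMap.proj_apply, smul_eq_mul, hpd]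
    rw [Finset.sum_add_distrib]
    congr 1
    simp [Pi.single_apply]
  have hpd2 : ∀ (t : ℝ) (y : Fin n → ℝ) (i : Fin n),
      pd (fun z => ∑ j, (s z t j)^2) i y
        = ∑ j, 2 * s y t j * pd (fun z => s z t j) i y := by
    intro t y i
    set D : Fin n → ((Fin n → ℝ) →L[ℝ] ℝ) := fun j => fderiv ℝ (fun z => s z t j) y with hD
    have hpd : ∀ j, pd (fun z => s z t j) i y = D j (Pi.single i 1) := fun j => rfl
    have h2 : HasFDerivAt (fun z : Fin n → ℝ => ∑ j, (s z t j)^2)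
        (∑ j, (s y t j • D j + s y t j • D j)) y := by
      apply HasFDerivAt.fun_sum
      intro j _
      have := (hsd t y j).fun_mul (hsd t y j)
      simpa [pow_two] using this
    rw [pd, h2.fderiv]
    simp only [ContinuousLinearMap.sum_apply, ContinuousLinearMap.add_apply,
      ContinuousLinearMap.smul_apply, smul_eq_mul, hpd]
    refine Finset.sum_congr rfl fun j _ => by ring
  -- the total derivative is s/2 along characteristics
  have hg : ∀ t ∈ Set.Icc (0:ℝ) T, ∀ i,
      HasDerivAt (fun τ => s (x τ) τ i) (s (x t) t i / 2) t := by
    intro t ht i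
    have h := hchain t i
    have hd : ∀ j, deriv x t j = -(x t j / 2 + s (x t) t j) := by
      intro j
      rw [hode t ht]
      simp
      ring
    have hsum : ∑ j, deriv x t j * pd (fun y => s y t i) j (x t)
        = ∑ j, (-(1/2) * (x t j * pd (fun z => s z t j) i (x t))
            - s (x t) t j * pd (fun z => s z t j) i (x t)) := by
      refine Finset.sum_congr rfl fun j _ => ?_
      rw [← hsym (x t) t i j, hd j]
      ring
    have hval : deriv (fun τ => s (x t) τ i) t +
        ∑ j, deriv x t j * pd (fun y => s y t i) j (x t) = s (x t) t i / 2 := by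
      rw [hFP (x t) t ht i, hpd1 t (x t) i, hpd2 t (x t) i, hsum,
        Finset.sum_sub_distrib]
      rw [← Finset.mul_sum]
      have h2S : ∑ j, 2 * s (x t) t j * pd (fun z => s z t j) i (x t)
          = 2 * ∑ j, s (x t) t j * pd (fun z => s z t j) i (x t) := by
        rw [Finset.mul_sum]
        exact Finset.sum_congr rfl fun j _ => by ring
      rw [h2S]
      ring
    rw [hval] at h
    exact h
  -- continuity of τ ↦ s (x τ) τ i
  have hgc : ∀ i, Continuous (fun τ => s (x τ) τ i) := by
    intro i
    exact ((hFc i).continuous).comp ((hx.continuous).prodMk continuous_id)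
  set c : Fin n → ℝ := s x₀ 0 with hc
  -- Part B : s (x t) t i = exp (t/2) * c i
  have hB : ∀ t ∈ Set.Icc (0:ℝ) T, ∀ i, s (x t) t i = Real.exp (t/2) * c i := by
    intro t ht i
    set h : ℝ → ℝ := fun τ => Real.exp (-τ/2) * s (x τ) τ i with hh
    have hcont : ContinuousOn h (Set.Icc 0 T) :=
      (((Real.continuous_exp.comp (by continuity)).mul (hgc i))).continuousOn
    have hderiv : ∀ τ ∈ Set.Ico (0:ℝ) T, HasDerivWithinAt h 0 (Set.Ici τ) τ := by
      intro τ hτ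
      have hτ' : τ ∈ Set.Icc (0:ℝ) T := ⟨hτ.1, le_of_lt hτ.2⟩
      have h1 : HasDerivAt (fun u : ℝ => Real.exp (-u/2)) (Real.exp (-τ/2) * (-1/2)) τ := by
        have := ((hasDerivAt_id τ).neg.div_const 2).exp
        simpa [neg_div] using this
      have h2 := h1.mul (hg τ hτ' i)
      have h3 : HasDerivAt h 0 τ := by
        exact h2.congr_deriv (by ring)
      exact h3.hasDerivWithinAt
    have := constant_of_has_deriv_right_zero hcont hderiv t ht
    have h0 : h 0 = c i := by
      simp [hh, hx0, hc]
    rw [h0] at this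
    have key : Real.exp (-t/2) * s (x t) t i = c i := this
    have hne : Real.exp (-t/2) * Real.exp (t/2) = 1 := by
      rw [← Real.exp_add]; ring_nf; exact Real.exp_zero
    calc s (x t) t i = (Real.exp (-t/2) * Real.exp (t/2)) * s (x t) t i := by rw [hne]; ring
      _ = Real.exp (t/2) * (Real.exp (-t/2) * s (x t) t i) := by ring
      _ = Real.exp (t/2) * c i := by rw [key]
  -- Part C : closed form for x
  have hxi : ∀ (τ : ℝ) (i : Fin n), HasDerivAt (fun u => x u i) (deriv x τ i) τ := by
    intro τ i
    exact (hasDerivAt_pi.1 (hxd τ)) i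
  have hC : ∀ t ∈ Set.Icc (0:ℝ) T, ∀ i,
      Real.exp (t/2) * x t i + (Real.exp t - 1) * c i = x₀ i := by
    intro t ht i
    set w : ℝ → ℝ := fun τ => Real.exp (τ/2) * x τ i + (Real.exp τ - 1) * c i with hw
    have hcont : ContinuousOn w (Set.Icc 0 T) := by
      apply Continuous.continuousOn
      exact ((Real.continuous_exp.comp (continuous_id.div_const 2)).mul
          ((continuous_apply i).comp hx.continuous)).add
        ((Real.continuous_exp.sub continuous_const).mul continuous_const)
    have hderiv : ∀ τ ∈ Set.Ico (0:ℝ) T, HasDerivWithinAt w 0 (Set.Ici τ) τ := by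
      intro τ hτ
      have hτ' : τ ∈ Set.Icc (0:ℝ) T := ⟨hτ.1, le_of_lt hτ.2⟩
      have h1 : HasDerivAt (fun u : ℝ => Real.exp (u/2)) (Real.exp (τ/2) * (1/2)) τ := by
        have := ((hasDerivAt_id τ).div_const 2).exp
        simpa using this
      have h2 := h1.mul (hxi τ i)
      have h3 := ((Real.hasDerivAt_exp τ).sub_const 1).mul_const (c i)
      have h4 := h2.add h3
      have hdd : deriv x τ i = -(x τ i / 2 + Real.exp (τ/2) * c i) := by
        rw [hode τ hτ']
        simp [hB τ hτ' i]
        ring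
      have hee : Real.exp (τ/2) * Real.exp (τ/2) = Real.exp τ := by
        rw [← Real.exp_add]; ring_nf
      have h5 : HasDerivAt w 0 τ := by
        exact h4.congr_deriv (by rw [hdd, ← hee]; ring)
      exact h5.hasDerivWithinAt
    have := constant_of_has_deriv_right_zero hcont hderiv t ht
    have h0 : w 0 = x₀ i := by
      simp [hw, hx0]
    rw [h0] at this
    exact this
  -- conclude
  intro t ht
  constructor
  · funext i
    have hCi := hC t ht i
    have hBi := hB t ht i
    have e1 : Real.exp (-t/2) * Real.exp (t/2) = 1 := by
      rw [← Real.exp_add]; ring_nf; exact Real.exp_zero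
    have e2 : Real.exp (-t) * Real.exp (t/2) * Real.exp (t/2) = 1 := by
      rw [← Real.exp_add, ← Real.exp_add]; ring_nf; exact Real.exp_zero
    have e3 : Real.exp (-t/2) = Real.exp (-t) * Real.exp (t/2) := by
      rw [← Real.exp_add]; ring_nf
    simp only [Pi.sub_apply, Pi.smul_apply, smul_eq_mul]
    rw [hBi]
    have hx_t : x t i = Real.exp (-t/2) * (x₀ i - (Real.exp t - 1) * c i) := by
      linear_combination Real.exp (-t/2) * hCi - (x t i) * e1
    rw [hx_t]
    have et : Real.exp t = Real.exp (t/2) * Real.exp (t/2) := by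
      rw [← Real.exp_add]; ring_nf
    linear_combination (c i) * (-(Real.exp (-t/2))) * et
      + (c i) * (-(Real.exp (t/2))) * e1 + (c i) * e3
  · funext i
    simp only [Pi.smul_apply, smul_eq_mul]
    exact hB t ht i
end

section
/- Let s, s₁, s₂ solve ∂_t s = (1/2)(∇(s·x) + ∇‖s‖²) as gradient fields with initial condition s(·,0) = (1+ω)s₁(·,0) − ω s₂(·,0). If their characteristic lines x(t), x₁(t), x₂(t) all start at the same point x₀ and satisfy the characteristic-line relations, then s(x(t),t) = (1+ω) s₁(x₁(t),t) − ω s₂(x₂(t),t), the lines satisfy (1+ω)x₁(t) − ω x₂(t) = x(t), and defining Δx by x₁(t) = x(t) + ω Δx, x₂(t) = x(t) + (1+ω)Δx, one has Δx = (s₁(x₁(t),t) − s₂(x₂(t),t))(1 − e^{−t}). -/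
/-!
Along a characteristic line the value of the solution is its initial value scaled by the common
factor `e^{t/2}`, so the affine relation between the initial data persists along the three lines.
Each line position is `e^{-t/2} x₀ - (1 - e^{-t}) s`, an affine function of the value `s` with the
same base point and coefficient for all three solutions; since the weights `1 + ω` and `-ω` sum to
one, the same affine relation holds for the positions, and `Δx = x₂ - x₁` is read off directly.
-/

section AffineCombination

variable {R M : Type*} [CommRing R] [AddCommGroup M] [Module R M]

theorem eq_affineCombination_of_eq_smul (c ω : R) {v v₁ v₂ w w₁ w₂ : M}
    (hv : v = c • w) (hv₁ : v₁ = c • w₁) (hv₂ : v₂ = c • w₂)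
    (hw : w = (1 + ω) • w₁ - ω • w₂) :
    v = (1 + ω) • v₁ - ω • v₂ := by
  subst hv hv₁ hv₂ hw
  module

theorem affineCombination_eq_of_eq_sub_smul (k ω : R) {p x x₁ x₂ u u₁ u₂ : M}
    (hx : x = p - k • u) (hx₁ : x₁ = p - k • u₁) (hx₂ : x₂ = p - k • u₂)
    (hu : u = (1 + ω) • u₁ - ω • u₂) :
    (1 + ω) • x₁ - ω • x₂ = x := by
  subst hx hx₁ hx₂ hu
  module

theorem eq_smul_sub_of_eq_sub_smul (k ω : R) {p x x₁ x₂ u₁ u₂ Δ : M}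
    (hx₁ : x₁ = p - k • u₁) (hx₂ : x₂ = p - k • u₂)
    (h₁ : x₁ = x + ω • Δ) (h₂ : x₂ = x + (1 + ω) • Δ) :
    Δ = k • (u₁ - u₂) := by
  linear_combination (norm := module) hx₂ - hx₁ - h₂ + h₁

end AffineCombination

theorem stmt_9_general {n : ℕ} (ω : ℝ)
    (s s₁ s₂ : (Fin n → ℝ) → ℝ → Fin n → ℝ)
    (x x₁ x₂ : ℝ → Fin n → ℝ) (x₀ : Fin n → ℝ)
    (hinit : ∀ y, s y 0 = (1 + ω) • s₁ y 0 - ω • s₂ y 0)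
    (hline : ∀ t,
      x t = Real.exp (-t / 2) • x₀ - (1 - Real.exp (-t)) • s (x t) t
        ∧ s (x t) t = Real.exp (t / 2) • s x₀ 0)
    (hline₁ : ∀ t,
      x₁ t = Real.exp (-t / 2) • x₀ - (1 - Real.exp (-t)) • s₁ (x₁ t) t
        ∧ s₁ (x₁ t) t = Real.exp (t / 2) • s₁ x₀ 0)
    (hline₂ : ∀ t,
      x₂ t = Real.exp (-t / 2) • x₀ - (1 - Real.exp (-t)) • s₂ (x₂ t) t
        ∧ s₂ (x₂ t) t = Real.exp (t / 2) • s₂ x₀ 0) :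
    ∀ t,
      s (x t) t = (1 + ω) • s₁ (x₁ t) t - ω • s₂ (x₂ t) t
      ∧ (1 + ω) • x₁ t - ω • x₂ t = x t
      ∧ ∀ Δx : Fin n → ℝ,
          x₁ t = x t + ω • Δx → x₂ t = x t + (1 + ω) • Δx →
          Δx = (1 - Real.exp (-t)) • (s₁ (x₁ t) t - s₂ (x₂ t) t) := by
  intro t
  obtain ⟨hx, hs⟩ := hline t
  obtain ⟨hx₁, hs₁⟩ := hline₁ t
  obtain ⟨hx₂, hs₂⟩ := hline₂ t
  have hvalue := eq_affineCombination_of_eq_smul _ ω hs hs₁ hs₂ (hinit x₀)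
  exact ⟨hvalue, affineCombination_eq_of_eq_sub_smul _ ω hx hx₁ hx₂ hvalue,
    fun Δx h₁ h₂ => eq_smul_sub_of_eq_sub_smul _ ω hx₁ hx₂ h₁ h₂⟩

/-- With s(·,0) = (1+ω)s₁(·,0) − ω s₂(·,0) and characteristic lines
x(t), x₁(t), x₂(t) of s, s₁, s₂ all starting at x₀, one has
s(x(t),t) = (1+ω)s₁(x₁(t),t) − ω s₂(x₂(t),t), (1+ω)x₁(t) − ω x₂(t) = x(t), and
if x₁(t) = x(t) + ωΔx and x₂(t) = x(t) + (1+ω)Δx then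
Δx = (s₁(x₁(t),t) − s₂(x₂(t),t))(1 − e^{−t}). -/
theorem stmt_9 {n : ℕ} (ω : ℝ)
    (s s₁ s₂ : (Fin n → ℝ) → ℝ → Fin n → ℝ)
    (x x₁ x₂ : ℝ → Fin n → ℝ) (x₀ : Fin n → ℝ)
    (h0 : x 0 = x₀) (h10 : x₁ 0 = x₀) (h20 : x₂ 0 = x₀)
    (hinit : ∀ y, s y 0 = (1 + ω) • s₁ y 0 - ω • s₂ y 0)
    (hline : ∀ t,
      x t = Real.exp (-t / 2) • x₀ - (1 - Real.exp (-t)) • s (x t) t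
        ∧ s (x t) t = Real.exp (t / 2) • s x₀ 0)
    (hline₁ : ∀ t,
      x₁ t = Real.exp (-t / 2) • x₀ - (1 - Real.exp (-t)) • s₁ (x₁ t) t
        ∧ s₁ (x₁ t) t = Real.exp (t / 2) • s₁ x₀ 0)
    (hline₂ : ∀ t,
      x₂ t = Real.exp (-t / 2) • x₀ - (1 - Real.exp (-t)) • s₂ (x₂ t) t
        ∧ s₂ (x₂ t) t = Real.exp (t / 2) • s₂ x₀ 0) :
    ∀ t,
      s (x t) t = (1 + ω) • s₁ (x₁ t) t - ω • s₂ (x₂ t) t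
      ∧ (1 + ω) • x₁ t - ω • x₂ t = x t
      ∧ ∀ Δx : Fin n → ℝ,
          x₁ t = x t + ω • Δx → x₂ t = x t + (1 + ω) • Δx →
          Δx = (1 - Real.exp (-t)) • (s₁ (x₁ t) t - s₂ (x₂ t) t) :=
  stmt_9_general ω s s₁ s₂ x x₁ x₂ x₀ hinit hline hline₁ hline₂
end

section
/- The function s(x,t) = (c(1+ω) e^{t/2}·5 − (4ω+5)e^t x) / ((4ω+5)e^t − 4ω) (componentwise, with c ∈ ℝ² and x ∈ ℝ²) solves the score Fokker–Planck equation ∂_t s = (1/2)(∇(s·x) + Δs + ∇‖s‖²) for all t > 0 where (4ω+5)e^t − 4ω ≠ 0. -/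
open Real

section PartialDerivatives

variable {n : ℕ}

lemma pd_of_hasFDerivAt {f : (Fin n → ℝ) → ℝ} {L : (Fin n → ℝ) →L[ℝ] ℝ} {x : Fin n → ℝ}
    (h : HasFDerivAt f L x) (i : Fin n) : pd f i x = L (Pi.single i 1) := by
  rw [pd, h.fderiv]

lemma pd_const (a : ℝ) (i : Fin n) (x : Fin n → ℝ) : pd (fun _ => a) i x = 0 := by
  simp [pd]

lemma hasFDerivAt_const_sub_mul_apply (a b : ℝ) (j : Fin n) (x : Fin n → ℝ) :
    HasFDerivAt (fun y : Fin n → ℝ => a - b * y j)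
      (-(b • ContinuousLinearMap.proj j : (Fin n → ℝ) →L[ℝ] ℝ)) x :=
  ((ContinuousLinearMap.proj j : (Fin n → ℝ) →L[ℝ] ℝ).hasFDerivAt.const_mul b).const_sub a

lemma pd_const_sub_mul_apply (a b : ℝ) (j i : Fin n) (x : Fin n → ℝ) :
    pd (fun y => a - b * y j) i x = -(b * (Pi.single i 1 : Fin n → ℝ) j) := by
  rw [pd_of_hasFDerivAt (hasFDerivAt_const_sub_mul_apply a b j x)]
  simp

lemma pd_sum_const_sub_mul_apply_mul_apply (a : Fin n → ℝ) (b : ℝ) (i : Fin n)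
    (x : Fin n → ℝ) :
    pd (fun y => ∑ j, (a j - b * y j) * y j) i x = a i - 2 * b * x i := by
  have h := HasFDerivAt.fun_sum (u := Finset.univ) fun j _ =>
    (hasFDerivAt_const_sub_mul_apply (a j) b j x).fun_mul (hasFDerivAt_apply j x)
  rw [pd_of_hasFDerivAt h]
  simp only [smul_neg, ← sub_eq_add_neg, Finset.sum_sub_distrib, sub_apply, sum_apply, smul_apply,
    ContinuousLinearMap.proj_apply, Pi.single_apply, smul_eq_mul, mul_ite, mul_one, mul_zero,
    Finset.sum_ite_eq', Finset.mem_univ, ↓reduceIte]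
  ring

lemma pd_sum_const_sub_mul_apply_sq (a : Fin n → ℝ) (b : ℝ) (i : Fin n) (x : Fin n → ℝ) :
    pd (fun y => ∑ j, (a j - b * y j) ^ 2) i x = -2 * b * (a i - b * x i) := by
  have h := HasFDerivAt.fun_sum (u := Finset.univ) fun j _ =>
    (hasFDerivAt_const_sub_mul_apply (a j) b j x).pow 2
  rw [pd_of_hasFDerivAt h]
  simp only [Nat.add_one_sub_one, pow_one, nsmul_eq_mul, Nat.cast_ofNat, smul_neg,
    Finset.sum_neg_distrib, neg_apply, sum_apply, smul_apply, ContinuousLinearMap.proj_apply,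
    Pi.single_apply, smul_eq_mul, mul_ite, mul_one, mul_zero, Finset.sum_ite_eq', Finset.mem_univ,
    ↓reduceIte]
  ring

end PartialDerivatives

section ScoreFokkerPlanck

variable {n : ℕ}

noncomputable def scoreFokkerPlanckRHS (s : (Fin n → ℝ) → Fin n → ℝ) (x : Fin n → ℝ)
    (i : Fin n) : ℝ :=
  (1 / 2) * (pd (fun y => ∑ j, s y j * y j) i x
    + (∑ j, pd (fun y => pd (fun z => s z i) j y) j x)
    + pd (fun y => ∑ j, (s y j) ^ 2) i x)

lemma scoreFokkerPlanckRHS_const_sub_mul (a : Fin n → ℝ) (b : ℝ) (x : Fin n → ℝ) (i : Fin n) :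
    scoreFokkerPlanckRHS (fun y j => a j - b * y j) x i
      = ((1 - 2 * b) * a i - 2 * b * (1 - b) * x i) / 2 := by
  simp only [scoreFokkerPlanckRHS, pd_sum_const_sub_mul_apply_mul_apply,
    pd_sum_const_sub_mul_apply_sq, pd_const_sub_mul_apply, pd_const, Finset.sum_const_zero]
  ring

end ScoreFokkerPlanck

lemma hasDerivAt_exp_half_sub_exp_div (α β κ μ t : ℝ) (h : κ * exp t - μ ≠ 0) :
    HasDerivAt (fun τ => (α * exp (τ / 2) - β * exp τ) / (κ * exp τ - μ))
      (((α * (exp (t / 2) / 2) - β * exp t) * (κ * exp t - μ)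
        - (α * exp (t / 2) - β * exp t) * (κ * exp t)) / (κ * exp t - μ) ^ 2) t := by
  have hhalf : HasDerivAt (fun τ => exp (τ / 2)) (exp (t / 2) / 2) t := by
    simpa [div_eq_mul_inv] using ((hasDerivAt_id t).div_const 2).exp
  exact ((hhalf.const_mul α).sub ((hasDerivAt_exp t).const_mul β)).div
    (((hasDerivAt_exp t).const_mul κ).sub_const μ) h

/-- s(x,t) = (5c(1+ω)e^{t/2} − (4ω+5)e^t x)/((4ω+5)e^t − 4ω) solves the
score Fokker–Planck equation ∂ₜ s = (1/2)(∇(s·x) + Δs + ∇‖s‖²) for t > 0 whenever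
(4ω+5)e^t − 4ω ≠ 0. -/
theorem stmt_12 (c : Fin 2 → ℝ) (ω : ℝ)
    (s : (Fin 2 → ℝ) → ℝ → Fin 2 → ℝ)
    (hs : ∀ x t i,
      s x t i = (5 * c i * (1 + ω) * Real.exp (t / 2)
          - (4 * ω + 5) * Real.exp t * x i)
        / ((4 * ω + 5) * Real.exp t - 4 * ω)) :
    ∀ (x : Fin 2 → ℝ) (t : ℝ), 0 < t →
      (4 * ω + 5) * Real.exp t - 4 * ω ≠ 0 →
      ∀ i, deriv (fun τ => s x τ i) t =
        (1 / 2) * (pd (fun y => ∑ j, s y t j * y j) i x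
          + (∑ j, pd (fun y => pd (fun z => s z t i) j y) j x)
          + pd (fun y => ∑ j, (s y t j) ^ 2) i x) := by
  intro x t _ hD i
  have h_space : (fun y => s y t)
      = fun y j => 5 * c j * (1 + ω) * exp (t / 2) / ((4 * ω + 5) * exp t - 4 * ω)
          - (4 * ω + 5) * exp t / ((4 * ω + 5) * exp t - 4 * ω) * y j := by
    funext y j
    rw [hs]
    ring
  have h_time : (fun τ => s x τ i) = fun τ => (5 * c i * (1 + ω) * exp (τ / 2)
      - (4 * ω + 5) * x i * exp τ) / ((4 * ω + 5) * exp τ - 4 * ω) := by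
    funext τ
    rw [hs]
    ring
  change deriv _ t = scoreFokkerPlanckRHS (fun y => s y t) x i
  rw [h_space, scoreFokkerPlanckRHS_const_sub_mul, h_time,
    (hasDerivAt_exp_half_sub_exp_div _ _ _ _ t hD).deriv]
  -- with the denominator abstracted, `field_simp` can use `hD` as it stands
  generalize hD_def : (4 * ω + 5) * exp t - 4 * ω = D at hD ⊢
  field_simp
  subst hD_def
  ring
end

section
/- If s(x,t) solves the harmonic-ansatz score equation ∂_t s = (1/2)(∇(s·x) + ∇‖s‖²) and additionally Δ_x s = 0, then ε(x,t) = −√(1−e^{−t}) s(x,t) has zero mixing error: ∂_t ε − (1/2)(∇(ε·x) + Δε + ((1−σ²)/σ²)ε − (1/σ)∇‖ε‖²) = 0 where σ(t) = √(1−e^{−t}). -/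
lemma pd_const_mul {n : ℕ} (c : ℝ) (f : (Fin n → ℝ) → ℝ) (i : Fin n) (x : Fin n → ℝ)
    (hf : DifferentiableAt ℝ f x) :
    pd (fun y => c * f y) i x = c * pd f i x := by
  unfold pd
  rw [fderiv_const_mul hf]
  simp

/-- If s is a smooth gradient field with Δₓ s = 0 solving the
harmonic-ansatz score equation ∂ₜ s = (1/2)(∇(s·x) + ∇‖s‖²), then
ε(x,t) = −√(1−e^{−t}) s(x,t) has zero mixing error:
∂ₜ ε − (1/2)(∇(ε·x) + Δε + ((1−σ²)/σ²)ε − (1/σ)∇‖ε‖²) = 0 with σ(t) = √(1−e^{−t}). -/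
theorem stmt_19 {n : ℕ} (T : ℝ) (hT : 0 < T)
    (s : (Fin n → ℝ) → ℝ → Fin n → ℝ)
    (hsmooth : ContDiff ℝ (⊤ : ℕ∞) (Function.uncurry s))
    (hsym : ∀ x t i j, pd (fun y => s y t j) i x = pd (fun y => s y t i) j x)
    (hharm : ∀ (x : Fin n → ℝ), ∀ t ∈ Set.Ioc (0 : ℝ) T, ∀ i,
      (∑ j, pd (fun y => pd (fun z => s z t i) j y) j x) = 0)
    (hFP : ∀ (x : Fin n → ℝ), ∀ t ∈ Set.Ioc (0 : ℝ) T, ∀ i,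
      deriv (fun τ => s x τ i) t =
        (1 / 2) * (pd (fun y => ∑ j, s y t j * y j) i x
          + pd (fun y => ∑ j, (s y t j) ^ 2) i x))
    (σ : ℝ → ℝ) (hσ : ∀ t, σ t = Real.sqrt (1 - Real.exp (-t)))
    (ε : (Fin n → ℝ) → ℝ → Fin n → ℝ)
    (hε : ∀ x t i, ε x t i = -σ t * s x t i) :
    ∀ (x : Fin n → ℝ), ∀ t ∈ Set.Ioc (0 : ℝ) T, ∀ i,
      deriv (fun τ => ε x τ i) t
        - (1 / 2) * (pd (fun y => ∑ j, ε y t j * y j) i x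
          + (∑ j, pd (fun y => pd (fun z => ε z t i) j y) j x)
          + ((1 - σ t ^ 2) / σ t ^ 2) * ε x t i
          - (1 / σ t) * pd (fun y => ∑ j, (ε y t j) ^ 2) i x) = 0 := by
  intro x t ht i
  obtain ⟨ht0, htT⟩ := ht
  have hexp : Real.exp (-t) < 1 := by
    rw [Real.exp_lt_one_iff]; linarith
  have hpos : 0 < 1 - Real.exp (-t) := by linarith
  have hσ2 : σ t ^ 2 = 1 - Real.exp (-t) := by
    rw [hσ]; exact Real.sq_sqrt hpos.le
  have hσpos : 0 < σ t := by rw [hσ]; exact Real.sqrt_pos.mpr hpos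
  have hσne : σ t ≠ 0 := hσpos.ne'
  -- smoothness in space
  have hs_y : ∀ t i, ContDiff ℝ (⊤ : ℕ∞) (fun y => s y t i) := by
    intro t i
    have h1 : ContDiff ℝ (⊤ : ℕ∞) (fun y : Fin n → ℝ => Function.uncurry s (y, t)) :=
      hsmooth.comp (contDiff_id.prodMk contDiff_const)
    exact (contDiff_pi.mp h1) i
  -- smoothness in time
  have hs_t : DifferentiableAt ℝ (fun τ => s x τ i) t := by
    have h1 : ContDiff ℝ (⊤ : ℕ∞) (fun τ : ℝ => Function.uncurry s (x, τ)) :=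
      hsmooth.comp (contDiff_const.prodMk contDiff_id)
    exact (((contDiff_pi.mp h1) i).differentiable (by simp)) t
  -- derivative of σ
  have hσfun : σ = fun τ => Real.sqrt (1 - Real.exp (-τ)) := funext hσ
  have hσd : HasDerivAt σ (Real.exp (-t) / (2 * σ t)) t := by
    have h1 : HasDerivAt (fun τ : ℝ => 1 - Real.exp (-τ)) (Real.exp (-t)) t := by
      have h2 := (Real.hasDerivAt_exp (-t)).comp t (hasDerivAt_neg t)
      have h3 : HasDerivAt (fun τ : ℝ => 1 - Real.exp (-τ)) (0 - Real.exp (-t) * -1) t :=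
        (hasDerivAt_const t (1 : ℝ)).sub h2
      simpa using h3
    have h4 := (Real.hasDerivAt_sqrt hpos.ne').comp t h1
    rw [hσfun]
    convert h4 using 1
    show Real.exp (-t) / (2 * Real.sqrt (1 - Real.exp (-t))) = _
    rw [div_eq_mul_inv, one_div, mul_comm]
    all_goals rfl
  -- time derivative of ε
  have hεt : deriv (fun τ => ε x τ i) t
      = -(Real.exp (-t) / (2 * σ t)) * s x t i + -σ t * deriv (fun τ => s x τ i) t := by
    have he : (fun τ => ε x τ i) = fun τ => -σ τ * s x τ i := funext fun τ => hε x τ i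
    rw [he]
    exact ((hσd.neg).mul hs_t.hasDerivAt).deriv
  rw [hεt, hFP x t ⟨ht0, htT⟩ i, hε x t i]
  -- gradient of ε·x term
  have hA : pd (fun y => ∑ j, ε y t j * y j) i x
      = -σ t * pd (fun y => ∑ j, s y t j * y j) i x := by
    have e1 : (fun y => ∑ j, ε y t j * y j) = fun y => -σ t * ∑ j, s y t j * y j := by
      funext y
      rw [Finset.mul_sum]
      congr 1 with j
      rw [hε]; ring
    rw [e1, pd_const_mul]
    apply DifferentiableAt.fun_sum
    intro j _
    exact (((hs_y t j).differentiable (by simp)) x).mul ((ContinuousLinearMap.proj j :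
      (Fin n → ℝ) →L[ℝ] ℝ).differentiable x)
  -- gradient of ‖ε‖² term
  have hB : pd (fun y => ∑ j, (ε y t j) ^ 2) i x
      = σ t ^ 2 * pd (fun y => ∑ j, (s y t j) ^ 2) i x := by
    have e1 : (fun y => ∑ j, (ε y t j) ^ 2) = fun y => σ t ^ 2 * ∑ j, (s y t j) ^ 2 := by
      funext y
      rw [Finset.mul_sum]
      congr 1 with j
      rw [hε]; ring
    rw [e1, pd_const_mul]
    apply DifferentiableAt.fun_sum
    intro j _
    exact (((hs_y t j).differentiable (by simp)) x).pow 2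
  -- Laplacian term
  have hpdd : ∀ (j : Fin n), Differentiable ℝ (fun y => pd (fun z => s z t i) j y) := by
    intro j
    have hf : ContDiff ℝ (⊤ : ℕ∞) (fun y => fderiv ℝ (fun z => s z t i) y) :=
      (hs_y t i).fderiv_right (by simp)
    have h2 := (ContinuousLinearMap.apply ℝ ℝ (Pi.single j (1 : ℝ))).contDiff.comp hf
    exact h2.differentiable (by simp)
  have hLap : (∑ j, pd (fun y => pd (fun z => ε z t i) j y) j x) = 0 := by
    have e3 : ∀ j : Fin n, (fun y => pd (fun z => ε z t i) j y)
        = fun y => -σ t * pd (fun z => s z t i) j y := by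
      intro j; funext y
      have e : (fun z => ε z t i) = fun z => -σ t * s z t i := funext fun z => hε z t i
      rw [e, pd_const_mul _ _ _ _ (((hs_y t i).differentiable (by simp)) y)]
    have : (∑ j, pd (fun y => pd (fun z => ε z t i) j y) j x)
        = -σ t * ∑ j, pd (fun y => pd (fun z => s z t i) j y) j x := by
      rw [Finset.mul_sum]
      refine Finset.sum_congr rfl fun j _ => ?_
      rw [e3 j, pd_const_mul _ _ _ _ ((hpdd j) x)]
    rw [this, hharm x t ⟨ht0, htT⟩ i, mul_zero]
  rw [hA, hB, hLap]
  have hE : Real.exp (-t) = 1 - σ t ^ 2 := by linarith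
  rw [hE]
  field_simp
  ring
end
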